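/- arXiv:math/0209262 — 2 statements merged into one kernel-verified Lean document; each statement's English description precedes it below -/
import Mathlib

section
/- Let U ⊆ ℝ^N be open, η^{ij} a constant symmetric invertible real N×N matrix, and H^1,…,H^N : U → ℝ smooth. Then for every u ∈ U, the nondeformed symmetric bilinear form defined on basis elements by (e^i, e^j) = η^{ij} is invariant on the algebra A(u): (x ∘ y, z) = (x, z ∘ y) for all x, y, z in A(u), where e^i ∘ e^j = Σ_{s,k} η^{is} (∂²H^j/∂u^s∂u^k)(u) e^k. -/
/-- Partial derivative `∂f/∂u^s` of a function on `ℝ^N`. -/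
noncomputable def pd {N : ℕ} (s : Fin N) (f : (Fin N → ℝ) → ℝ) (u : Fin N → ℝ) : ℝ :=
  fderiv ℝ f u (Pi.single s 1)

/-- Second partial derivative `∂²f/∂u^s∂u^k`. -/
noncomputable def pd2 {N : ℕ} (s k : Fin N) (f : (Fin N → ℝ) → ℝ) (u : Fin N → ℝ) : ℝ :=
  pd k (pd s f) u

lemma pd2_symm {N : ℕ} (f : (Fin N → ℝ) → ℝ) (u : Fin N → ℝ)
    (hf : ContDiffAt ℝ 2 f u) (s k : Fin N) : pd2 s k f u = pd2 k s f u := by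
  have hsym : IsSymmSndFDerivAt ℝ f u := hf.isSymmSndFDerivAt (by norm_num)
  have hd : DifferentiableAt ℝ (fderiv ℝ f) u :=
    (hf.fderiv_right (m := 1) (by norm_num)).differentiableAt one_ne_zero
  have key : ∀ v w : Fin N → ℝ,
      fderiv ℝ (fun y => fderiv ℝ f y v) u w = fderiv ℝ (fderiv ℝ f) u w v := by
    intro v w
    have := fderiv_clm_apply hd (differentiableAt_const v)
    rw [show (fun y => fderiv ℝ f y v) = (fun y => (fderiv ℝ f y) ((fun _ => v) y)) from rfl, this]
    simp
  simp only [pd2]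
  rw [show pd s f = (fun y => fderiv ℝ f y (Pi.single s 1)) from rfl,
      show pd k f = (fun y => fderiv ℝ f y (Pi.single k 1)) from rfl]
  simp only [pd]
  rw [key, key, hsym]

/-- The nondeformed symmetric bilinear form `(e^i, e^j) = η^{ij}` is invariant on
the algebra `A(u)` with multiplication `e^i ∘ e^j = η^{is} (∂²H^j/∂u^s∂u^k)(u) e^k`
for every `u ∈ U`: `(x∘y, z) = (x, z∘y)`. -/
theorem stmt_10 {N : ℕ} (U : Set (Fin N → ℝ)) (hU : IsOpen U)
    (η : Matrix (Fin N) (Fin N) ℝ) (hηs : η.IsSymm) (hηi : IsUnit η.det)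
    (H : Fin N → (Fin N → ℝ) → ℝ)
    (hH : ∀ i, ContDiffOn ℝ (⊤ : ℕ∞) (H i) U)
    (u : Fin N → ℝ) (hu : u ∈ U)
    (mul : (Fin N → ℝ) → (Fin N → ℝ) → (Fin N → ℝ))
    (hmul : ∀ x y : Fin N → ℝ, ∀ k,
        mul x y k = ∑ i, ∑ j, x i * y j * (∑ s, η i s * pd2 s k (H j) u))
    (B : (Fin N → ℝ) → (Fin N → ℝ) → ℝ)
    (hB : ∀ x y, B x y = ∑ i, ∑ j, x i * y j * η i j) :
    ∀ x y z, B (mul x y) z = B x (mul z y) := by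
  have hD : ∀ j s k, pd2 s k (H j) u = pd2 k s (H j) u := fun j s k =>
    pd2_symm (H j) u (((hH j).contDiffAt (hU.mem_nhds hu)).of_le (by exact WithTop.coe_le_coe.2 (le_top : (2:ℕ∞) ≤ ⊤))) s k
  have hη : ∀ i j, η i j = η j i := fun i j => (hηs.apply i j).symm
  intro x y z
  rw [hB, hB]
  simp only [hmul, Finset.sum_mul, Finset.mul_sum]
  have key : ∀ (R : Fin N → Fin N → Fin N → Fin N → Fin N → ℝ),
      (∑ b1, ∑ b2, ∑ b3, ∑ b4, ∑ b5, R b3 b5 b2 b4 b1)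
    = ∑ a1, ∑ a2, ∑ a3, ∑ a4, ∑ a5, R a1 a2 a3 a4 a5 := by
    intro R
    calc (∑ b1, ∑ b2, ∑ b3, ∑ b4, ∑ b5, R b3 b5 b2 b4 b1)
        = ∑ p : Fin N × Fin N × Fin N × Fin N × Fin N,
            R p.2.2.1 p.2.2.2.2 p.2.1 p.2.2.2.1 p.1 := by
          simp only [Fintype.sum_prod_type]
      _ = ∑ p : Fin N × Fin N × Fin N × Fin N × Fin N,
            R p.1 p.2.1 p.2.2.1 p.2.2.2.1 p.2.2.2.2 :=
          Fintype.sum_equiv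
            ⟨fun b => (b.2.2.1, b.2.2.2.2, b.2.1, b.2.2.2.1, b.1),
             fun a => (a.2.2.2.2, a.2.2.1, a.1, a.2.2.2.1, a.2.1),
             fun _ => rfl, fun _ => rfl⟩ _ _ (fun b => rfl)
      _ = ∑ a1, ∑ a2, ∑ a3, ∑ a4, ∑ a5, R a1 a2 a3 a4 a5 := by
          simp only [Fintype.sum_prod_type]
  rw [← key (fun a1 a2 a3 a4 a5 =>
      x a1 * (z a3 * y a4 * (η a3 a5 * pd2 a5 a2 (H a4) u)) * η a1 a2)]
  refine Finset.sum_congr rfl fun b1 _ => Finset.sum_congr rfl fun b2 _ =>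
    Finset.sum_congr rfl fun b3 _ => Finset.sum_congr rfl fun b4 _ =>
    Finset.sum_congr rfl fun b5 _ => ?_
  rw [hD b4 b5 b1, hη b1 b2]
  ring
end

section
/- Let U ⊆ ℝ^N be a convex open set, η^{ij} a constant symmetric invertible real N×N matrix with inverse η_{ij}, and H^1,…,H^N : U → ℝ smooth. Suppose the commutativity condition Σ_s η^{is} ∂²H^j/∂u^s∂u^k = Σ_s η^{js} ∂²H^i/∂u^s∂u^k holds at every point of U for all indices i,j,k. Then there exist real constants c_{sk} and a smooth function Φ : U → ℝ (a 'potential') such that H^i(u) = Σ_s η^{is} ( (∂Φ/∂u^s)(u) − (1/2) Σ_k (c_{sk} − c_{ks}) u^k ) for all u ∈ U and all i. -/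
open scoped ContDiff


variable {N : ℕ}

lemma contDiffAt_pd {f : (Fin N → ℝ) → ℝ} {u : Fin N → ℝ} (hf : ContDiffAt ℝ ∞ f u) (s : Fin N) :
    ContDiffAt ℝ ∞ (pd s f) u := by
  have h1 : ContDiffAt ℝ ∞ (fderiv ℝ f) u := hf.fderiv_right (by simp)
  exact (ContinuousLinearMap.apply ℝ ℝ (Pi.single s 1)).contDiff.contDiffAt.comp u h1

/-- pd of a finite linear combination. -/
lemma pd_sum {ι : Type*} (T : Finset ι) (c : ι → ℝ) (f : ι → (Fin N → ℝ) → ℝ) {u : Fin N → ℝ}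
    (hf : ∀ j ∈ T, DifferentiableAt ℝ (f j) u) (s : Fin N) :
    pd s (fun x => ∑ j ∈ T, c j * f j x) u = ∑ j ∈ T, c j * pd s (f j) u := by
  unfold pd
  rw [fderiv_fun_sum (fun j hj => ((hf j hj).const_mul (c j)))]
  simp only [ContinuousLinearMap.coe_sum', Finset.sum_apply]
  refine Finset.sum_congr rfl fun j hj => ?_
  rw [fderiv_const_mul (hf j hj)]
  simp

lemma pd_congr_nhds {f g : (Fin N → ℝ) → ℝ} {u : Fin N → ℝ} (h : f =ᶠ[nhds u] g) (s : Fin N) :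
    pd s f u = pd s g u := by
  unfold pd; rw [h.fderiv_eq]

lemma pd2_sum {ι : Type*} (T : Finset ι) (c : ι → ℝ) (f : ι → (Fin N → ℝ) → ℝ)
    {U : Set (Fin N → ℝ)} (hUo : IsOpen U) {u : Fin N → ℝ} (hu : u ∈ U)
    (hf : ∀ j ∈ T, ContDiffOn ℝ ∞ (f j) U) (s k : Fin N) :
    pd2 s k (fun x => ∑ j ∈ T, c j * f j x) u = ∑ j ∈ T, c j * pd2 s k (f j) u := by
  have hat : ∀ j ∈ T, ∀ x ∈ U, ContDiffAt ℝ ∞ (f j) x := fun j hj x hx =>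
    (hf j hj).contDiffAt (hUo.mem_nhds hx)
  unfold pd2
  have h1 : pd s (fun x => ∑ j ∈ T, c j * f j x) =ᶠ[nhds u] fun x => ∑ j ∈ T, c j * pd s (f j) x := by
    filter_upwards [hUo.mem_nhds hu] with x hx
    exact pd_sum T c f (fun j hj => ((hat j hj x hx).differentiableAt (by simp))) s
  rw [pd_congr_nhds h1 k]
  exact pd_sum T c _ (fun j hj => (contDiffAt_pd (hat j hj u hu) s).differentiableAt (by simp)) k

lemma single_eq_smul (v : Fin N → ℝ) (k : Fin N) : (Pi.single k (v k) : Fin N → ℝ) = v k • (Pi.single k 1 : Fin N → ℝ) := by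
  ext j; by_cases h : j = k <;> simp [h, Pi.single_apply]

lemma clm_eq_zero_of_pd {L : (Fin N → ℝ) →L[ℝ] ℝ} (h : ∀ k, L (Pi.single k 1) = 0) : L = 0 := by
  ext v
  have : v = ∑ k, (Pi.single k (v k) : Fin N → ℝ) := (Finset.univ_sum_single v).symm
  rw [this, map_sum]
  simp only [single_eq_smul, map_smul, h, smul_eq_mul, mul_zero, Finset.sum_const_zero]
  rfl

lemma const_on_convex {A : (Fin N → ℝ) → ℝ} {U : Set (Fin N → ℝ)} (hUo : IsOpen U)
    (hUc : Convex ℝ U) (hdiff : ∀ x ∈ U, DifferentiableAt ℝ A x)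
    (hz : ∀ x ∈ U, ∀ k, pd k A x = 0) {x y : Fin N → ℝ} (hx : x ∈ U) (hy : y ∈ U) :
    A x = A y := by
  refine hUc.is_const_of_fderivWithin_eq_zero
    (fun z hz => (hdiff z hz).differentiableWithinAt) (fun z hzU => ?_) hx hy
  rw [fderivWithin_of_isOpen hUo hzU]
  exact clm_eq_zero_of_pd (fun k => hz z hzU k)

lemma clm2_symm {B : (Fin N → ℝ) →L[ℝ] ((Fin N → ℝ) →L[ℝ] ℝ)}
    (h : ∀ a k, B (Pi.single a 1) (Pi.single k 1) = B (Pi.single k 1) (Pi.single a 1))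
    (v w : Fin N → ℝ) : B v w = B w v := by
  conv_lhs => rw [← Finset.univ_sum_single v, ← Finset.univ_sum_single w]
  conv_rhs => rw [← Finset.univ_sum_single v, ← Finset.univ_sum_single w]
  simp only [map_sum, ContinuousLinearMap.coe_sum', Finset.sum_apply]
  rw [Finset.sum_comm]
  refine Finset.sum_congr rfl fun k _ => Finset.sum_congr rfl fun a _ => ?_
  rw [single_eq_smul v k, single_eq_smul w a]
  simp only [map_smul, ContinuousLinearMap.smul_apply, smul_eq_mul]
  rw [h k a]; ring

lemma collapse {M Mi : Matrix (Fin N) (Fin N) ℝ}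
    (hδ : ∀ a s, (∑ i, Mi a i * M i s) = if a = s then 1 else 0) (X : Fin N → ℝ) (a : Fin N) :
    ∑ i, Mi a i * ∑ s, M i s * X s = X a := by
  simp only [Finset.mul_sum]
  rw [Finset.sum_comm]
  have h1 : ∀ s, ∑ i, Mi a i * (M i s * X s) = (∑ i, Mi a i * M i s) * X s := by
    intro s; rw [Finset.sum_mul]; exact Finset.sum_congr rfl fun i _ => by ring
  simp only [h1, hδ]
  simp

lemma poincare {U : Set (Fin N → ℝ)} (hUo : IsOpen U) (hUc : Convex ℝ U)
    {u₀ : Fin N → ℝ} (hu₀ : u₀ ∈ U)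
    (W : (Fin N → ℝ) → ((Fin N → ℝ) →L[ℝ] ℝ)) (hW : ContDiffOn ℝ ∞ W U)
    (hsym : ∀ u ∈ U, ∀ v w, fderiv ℝ W u v w = fderiv ℝ W u w v) :
    ∃ Φ : (Fin N → ℝ) → ℝ, ContDiffOn ℝ ∞ Φ U ∧ ∀ u ∈ U, HasFDerivAt Φ (W u) u := by
  classical
  set γ : (Fin N → ℝ) → ℝ → (Fin N → ℝ) := fun x t => u₀ + t • (x - u₀) with hγ
  have hγmem : ∀ x ∈ U, ∀ t ∈ Set.Icc (0:ℝ) 1, γ x t ∈ U := by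
    intro x hx t ht
    have h := hUc hu₀ hx (a := 1 - t) (b := t) (by linarith [ht.2]) ht.1 (by ring)
    convert h using 1
    simp only [hγ]
    module
  set Φ : (Fin N → ℝ) → ℝ := fun x => ∫ t in (0:ℝ)..1, W (γ x t) (x - u₀) with hΦ
  have key : ∀ x₀ ∈ U, HasFDerivAt Φ (W x₀) x₀ := by
    intro x₀ hx₀
    -- choose a closed ball around x₀ inside U
    obtain ⟨δ, hδpos, hδU⟩ := Metric.isOpen_iff.1 hUo x₀ hx₀
    set ε : ℝ := δ / 2 with hε
    have hεpos : 0 < ε := by positivity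
    have hballU : Metric.closedBall x₀ ε ⊆ U :=
      (Metric.closedBall_subset_ball (by simp [hε]; linarith)).trans hδU
    -- the compact set swept by the segments
    set S : Set (Fin N → ℝ) :=
      (fun p : ℝ × (Fin N → ℝ) => γ p.2 p.1) '' (Set.Icc (0:ℝ) 1 ×ˢ Metric.closedBall x₀ ε)
      with hS
    have hScomp : IsCompact S := by
      refine (isCompact_Icc.prod (isCompact_closedBall x₀ ε)).image ?_
      simp only [hγ]
      fun_prop
    have hSU : S ⊆ U := by
      rintro - ⟨⟨t, x⟩, ⟨ht, hx⟩, rfl⟩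
      exact hγmem x (hballU hx) t ht
    have hSmem : ∀ x ∈ Metric.closedBall x₀ ε, ∀ t ∈ Set.Icc (0:ℝ) 1, γ x t ∈ S := by
      intro x hx t ht
      exact ⟨(t, x), ⟨ht, hx⟩, rfl⟩
    -- continuity data
    have hWc : ContinuousOn W U := hW.continuousOn
    have hDWc : ContinuousOn (fderiv ℝ W) U := hW.continuousOn_fderiv_of_isOpen hUo (by simp)
    have hWdiff : ∀ y ∈ U, HasFDerivAt W (fderiv ℝ W y) y := fun y hy =>
      ((hW.contDiffAt (hUo.mem_nhds hy)).differentiableAt (by simp)).hasFDerivAt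
    -- bounds on S
    obtain ⟨M₁, hM₁⟩ := hScomp.exists_bound_of_continuousOn (hWc.mono hSU)
    obtain ⟨M₂, hM₂⟩ := hScomp.exists_bound_of_continuousOn (E := (Fin N → ℝ) →L[ℝ] (Fin N → ℝ) →L[ℝ] ℝ) (f := fderiv ℝ W) (by exact hDWc.mono hSU)
    have hM₁0 : 0 ≤ M₁ := le_trans (norm_nonneg _) (hM₁ _ (hSmem x₀ (Metric.mem_closedBall_self hεpos.le) 0 (by norm_num)))
    have hM₂0 : 0 ≤ M₂ := le_trans (norm_nonneg _) (hM₂ _ (hSmem x₀ (Metric.mem_closedBall_self hεpos.le) 0 (by norm_num)))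
    -- the derivative integrand
    set F' : (Fin N → ℝ) → ℝ → ((Fin N → ℝ) →L[ℝ] ℝ) := fun x t =>
      W (γ x t) + t • ((fderiv ℝ W (γ x t)).flip (x - u₀)) with hF'
    have hIoc : Set.uIoc (0:ℝ) 1 = Set.Ioc 0 1 := Set.uIoc_of_le (by norm_num)
    have hIcc : Set.uIcc (0:ℝ) 1 = Set.Icc 0 1 := Set.uIcc_of_le (by norm_num)
    have hγcont : ∀ x, Continuous (fun t => γ x t) := by intro x; simp only [hγ]; fun_prop
    have hγmaps : ∀ x ∈ U, Set.MapsTo (fun t => γ x t) (Set.Icc (0:ℝ) 1) U :=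
      fun x hx t ht => hγmem x hx t ht
    -- differentiability of the integrand in x
    have hdiffF : ∀ t ∈ Set.Icc (0:ℝ) 1, ∀ x, γ x t ∈ U →
        HasFDerivAt (fun y => W (γ y t) (y - u₀)) (F' x t) x := by
      intro t ht x hmem
      have hinner : HasFDerivAt (fun y => γ y t) (t • ContinuousLinearMap.id ℝ (Fin N → ℝ)) x := by
        simpa only [hγ, id_eq] using (((hasFDerivAt_id x).sub_const u₀).fun_const_smul t).const_add u₀
      have hc : HasFDerivAt (fun y => W (γ y t))
          ((fderiv ℝ W (γ x t)).comp (t • ContinuousLinearMap.id ℝ (Fin N → ℝ))) x :=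
        (hWdiff _ hmem).comp x hinner
      have happ : HasFDerivAt (fun y => W (γ y t) (y - u₀)) _ x := hc.clm_apply ((hasFDerivAt_id x).sub_const u₀)
      refine happ.congr_fderiv ?_
      ext w
      simp only [hF', ContinuousLinearMap.add_apply, ContinuousLinearMap.comp_apply,
        ContinuousLinearMap.smul_apply, ContinuousLinearMap.coe_id', id_eq,
        ContinuousLinearMap.flip_apply, ContinuousLinearMap.coe_comp',
        Function.comp_apply, smul_eq_mul]
      rw [map_smul, ContinuousLinearMap.smul_apply, smul_eq_mul]
    -- continuity of the integrands in t
    have hWγcont : ∀ x ∈ U, ContinuousOn (fun t => W (γ x t)) (Set.Icc (0:ℝ) 1) :=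
      fun x hx => hWc.comp (hγcont x).continuousOn (hγmaps x hx)
    have hDWγcont : ∀ x ∈ U, ContinuousOn (fun t => fderiv ℝ W (γ x t)) (Set.Icc (0:ℝ) 1) :=
      fun x hx => hDWc.comp (hγcont x).continuousOn (hγmaps x hx)
    have hFcont : ∀ x ∈ U, ContinuousOn (fun t => W (γ x t) (x - u₀)) (Set.Icc (0:ℝ) 1) :=
      fun x hx => (hWγcont x hx).clm_apply continuousOn_const
    have hF'cont : ∀ x ∈ U, ContinuousOn (fun t => F' x t) (Set.Icc (0:ℝ) 1) := by
      intro x hx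
      refine ((hWγcont x hx).add (continuousOn_id.smul ?_))
      have hflip : Continuous fun A : (Fin N → ℝ) →L[ℝ] ((Fin N → ℝ) →L[ℝ] ℝ) => A.flip :=
        (ContinuousLinearMap.flipₗᵢ ℝ (Fin N → ℝ) (Fin N → ℝ) ℝ).continuous
      exact ((hflip.comp_continuousOn (hDWγcont x hx)).clm_apply continuousOn_const)
    -- apply differentiation under the integral sign
    have hball_subset : Metric.ball x₀ ε ⊆ U := (Metric.ball_subset_closedBall).trans hballU
    have main := intervalIntegral.hasFDerivAt_integral_of_dominated_of_fderiv_le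
      (F := fun x t => W (γ x t) (x - u₀)) (F' := F') (x₀ := x₀) (a := (0:ℝ)) (b := 1)
      (bound := fun _ => M₁ + M₂ * (‖x₀ - u₀‖ + ε)) (μ := MeasureTheory.volume) (Metric.ball_mem_nhds x₀ hεpos)
      ?_ ?_ ?_ ?_ ?_ ?_
    · -- identify the integral of F' x₀ with W x₀ via FTC
      have hγx₀mem : ∀ t ∈ Set.Icc (0:ℝ) 1, γ x₀ t ∈ U := hγmem x₀ hx₀
      have hg : ∀ t ∈ Set.uIcc (0:ℝ) 1,
          HasDerivAt (fun t => t • W (γ x₀ t)) (F' x₀ t) t := by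
        intro t ht
        rw [hIcc] at ht
        have hγ' : HasDerivAt (fun t => γ x₀ t) (x₀ - u₀) t := by
          have : HasDerivAt (fun t : ℝ => t • (x₀ - u₀)) ((1:ℝ) • (x₀ - u₀)) t :=
            (hasDerivAt_id t).smul_const (x₀ - u₀)
          simpa only [hγ, one_smul] using this.const_add u₀
        have hWt : HasDerivAt (fun t => W (γ x₀ t)) (fderiv ℝ W (γ x₀ t) (x₀ - u₀)) t :=
          (hWdiff _ (hγx₀mem t ht)).comp_hasDerivAt t hγ'
        have := (hasDerivAt_id t).smul hWt
        refine this.congr_deriv ?_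
        ext w
        have hs := hsym _ (hγx₀mem t ht) w (x₀ - u₀)
        simp only [hF', ContinuousLinearMap.add_apply, ContinuousLinearMap.smul_apply,
          ContinuousLinearMap.flip_apply, smul_eq_mul, ContinuousLinearMap.add_apply, id_eq]
        rw [hs]
        ring
      have hint : IntervalIntegrable (F' x₀) MeasureTheory.volume 0 1 :=
        ContinuousOn.intervalIntegrable (by rw [hIcc]; exact hF'cont x₀ hx₀)
      have hftc := intervalIntegral.integral_eq_sub_of_hasDerivAt hg hint
      have : (∫ t in (0:ℝ)..1, F' x₀ t) = W x₀ := by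
        rw [hftc]
        simp [hγ]
      rw [this] at main
      exact main
    · -- measurability of F x near x₀
      filter_upwards [Metric.ball_mem_nhds x₀ hεpos] with x hx
      exact (((hFcont x (hball_subset hx)).mono (by rw [hIoc]; exact Set.Ioc_subset_Icc_self)).aestronglyMeasurable measurableSet_uIoc)
    · exact ContinuousOn.intervalIntegrable (by rw [hIcc]; exact hFcont x₀ hx₀)
    · exact (((hF'cont x₀ hx₀).mono (by rw [hIoc]; exact Set.Ioc_subset_Icc_self)).aestronglyMeasurable measurableSet_uIoc)
    · -- the uniform bound
      refine MeasureTheory.ae_of_all _ fun t ht x hx => ?_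
      rw [hIoc] at ht
      have ht' : t ∈ Set.Icc (0:ℝ) 1 := ⟨ht.1.le, ht.2⟩
      have hmem : γ x t ∈ S := hSmem x (Metric.ball_subset_closedBall hx) t ht'
      have h1 : ‖W (γ x t)‖ ≤ M₁ := hM₁ _ hmem
      have h2 : ‖(fderiv ℝ W (γ x t)).flip (x - u₀)‖ ≤ M₂ * (‖x₀ - u₀‖ + ε) := by
        calc ‖(fderiv ℝ W (γ x t)).flip (x - u₀)‖
            ≤ ‖(fderiv ℝ W (γ x t)).flip‖ * ‖x - u₀‖ := ContinuousLinearMap.le_opNorm _ _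
          _ ≤ M₂ * (‖x₀ - u₀‖ + ε) := by
              rw [ContinuousLinearMap.opNorm_flip]
              refine mul_le_mul (hM₂ _ hmem) ?_ (norm_nonneg _) hM₂0
              calc ‖x - u₀‖ = ‖(x - x₀) + (x₀ - u₀)‖ := by abel_nf
                _ ≤ ‖x - x₀‖ + ‖x₀ - u₀‖ := norm_add_le _ _
                _ ≤ ‖x₀ - u₀‖ + ε := by
                    have := (Metric.mem_ball.1 hx).le
                    rw [dist_eq_norm] at this
                    linarith
      calc ‖F' x t‖ ≤ ‖W (γ x t)‖ + ‖t • ((fderiv ℝ W (γ x t)).flip (x - u₀))‖ := norm_add_le _ _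
        _ ≤ M₁ + M₂ * (‖x₀ - u₀‖ + ε) := by
            rw [norm_smul]
            have h3 : ‖t‖ ≤ 1 := by rw [Real.norm_eq_abs, abs_of_pos ht.1]; exact ht.2
            nlinarith [norm_nonneg ((fderiv ℝ W (γ x t)).flip (x - u₀))]
    · exact intervalIntegrable_const
    · refine MeasureTheory.ae_of_all _ fun t ht x hx => ?_
      rw [hIoc] at ht
      exact hdiffF t ⟨ht.1.le, ht.2⟩ x (hγmem x (hball_subset hx) t ⟨ht.1.le, ht.2⟩)
  refine ⟨Φ, ?_, key⟩
  rw [show ((∞ : WithTop ℕ∞)) = ∞ from rfl, contDiffOn_infty_iff_fderiv_of_isOpen hUo]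
  refine ⟨fun x hx => ((key x hx).differentiableAt).differentiableWithinAt, ?_⟩
  exact hW.congr fun x hx => (key x hx).fderiv

/-- If the multiplication of the algebras `A(u)` is commutative at every point of
a convex open set `U`, then there exist constants `c_{sk}` and a smooth potential
`Φ` with `H^i = η^{is}(∂Φ/∂u^s − (1/2)(c_{sk} − c_{ks})u^k)` on `U`. -/
theorem stmt_12 {N : ℕ} (U : Set (Fin N → ℝ)) (hUo : IsOpen U)
    (hUc : Convex ℝ U)
    (η : Matrix (Fin N) (Fin N) ℝ) (hηs : η.IsSymm) (hηi : IsUnit η.det)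
    (H : Fin N → (Fin N → ℝ) → ℝ)
    (hH : ∀ i, ContDiffOn ℝ (⊤ : ℕ∞) (H i) U)
    (hcomm : ∀ u ∈ U, ∀ i j k,
        ∑ s, η i s * pd2 s k (H j) u = ∑ s, η j s * pd2 s k (H i) u) :
    ∃ c : Fin N → Fin N → ℝ, ∃ Φ : (Fin N → ℝ) → ℝ,
      ContDiffOn ℝ (⊤ : ℕ∞) Φ U ∧
      ∀ i, ∀ u ∈ U, H i u
        = ∑ s, η i s * (pd s Φ u - (1 / 2) * ∑ k, (c s k - c k s) * u k) := by
    classical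
  rcases U.eq_empty_or_nonempty with hUe | ⟨u₀, hu₀⟩
  · refine ⟨0, 0, ?_, ?_⟩
    · intro x hx; rw [hUe] at hx; exact absurd hx (Set.notMem_empty x)
    · intro i u hu; rw [hUe] at hu; exact absurd hu (Set.notMem_empty u)
  set ηi := η⁻¹ with hηidef
  have hinv1 : η * ηi = 1 := Matrix.mul_nonsing_inv η hηi
  have hinv2 : ηi * η = 1 := Matrix.nonsing_inv_mul η hηi
  have hδ1 : ∀ i j, (∑ s, η i s * ηi s j) = if i = j then 1 else 0 := by
    intro i j
    calc ∑ s, η i s * ηi s j = (η * ηi) i j := (Matrix.mul_apply).symm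
      _ = (1 : Matrix (Fin N) (Fin N) ℝ) i j := by rw [hinv1]
      _ = if i = j then 1 else 0 := Matrix.one_apply
  have hδ2 : ∀ i j, (∑ s, ηi i s * η s j) = if i = j then 1 else 0 := by
    intro i j
    calc ∑ s, ηi i s * η s j = (ηi * η) i j := (Matrix.mul_apply).symm
      _ = (1 : Matrix (Fin N) (Fin N) ℝ) i j := by rw [hinv2]
      _ = if i = j then 1 else 0 := Matrix.one_apply
  set G : Fin N → (Fin N → ℝ) → ℝ := fun s u => ∑ j, ηi s j * H j u with hGdef
  have hGsmooth : ∀ s, ContDiffOn ℝ ∞ (G s) U :=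
    fun s => ContDiffOn.sum fun j _ => contDiffOn_const.mul (hH j)
  have hGat : ∀ s, ∀ x ∈ U, ContDiffAt ℝ ∞ (G s) x :=
    fun s x hx => (hGsmooth s).contDiffAt (hUo.mem_nhds hx)
  -- symmetry of second partials of G
  have hsymG : ∀ u ∈ U, ∀ a b k, pd2 a k (G b) u = pd2 b k (G a) u := by
    intro u hu a b k
    have expand : ∀ (b a : Fin N), pd2 a k (G b) u = ∑ j, ηi b j * pd2 a k (H j) u := by
      intro b a
      exact pd2_sum Finset.univ (fun j => ηi b j) H hUo hu (fun j _ => hH j) a k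
    have claim1 : ∀ (j a : Fin N),
        pd2 a k (H j) u = ∑ i, ηi a i * ∑ s, η i s * pd2 s k (H j) u :=
      fun j a => (collapse hδ2 (fun s => pd2 s k (H j) u) a).symm
    rw [expand b a, expand a b]
    calc ∑ j, ηi b j * pd2 a k (H j) u
        = ∑ j, ηi b j * ∑ i, ηi a i * ∑ s, η i s * pd2 s k (H j) u := by
          exact Finset.sum_congr rfl fun j _ => by rw [← claim1 j a]
      _ = ∑ j, ηi b j * ∑ i, ηi a i * ∑ s, η j s * pd2 s k (H i) u := by
          refine Finset.sum_congr rfl fun j _ => ?_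
          congr 1
          exact Finset.sum_congr rfl fun i _ => by rw [hcomm u hu i j k]
      _ = ∑ i, ηi a i * ∑ j, ηi b j * ∑ s, η j s * pd2 s k (H i) u := by
          simp only [Finset.mul_sum]
          rw [Finset.sum_comm]
          exact Finset.sum_congr rfl fun i _ => Finset.sum_congr rfl fun j _ =>
            Finset.sum_congr rfl fun s _ => by ring
      _ = ∑ i, ηi a i * pd2 b k (H i) u := by
          exact Finset.sum_congr rfl fun i _ => by rw [← claim1 i b]
  have hpdGdiff : ∀ a b, ∀ x ∈ U, DifferentiableAt ℝ (pd a (G b)) x :=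
    fun a b x hx => (contDiffAt_pd (hGat b x hx) a).differentiableAt (by simp)
  set K : Fin N → Fin N → ℝ := fun a b => pd a (G b) u₀ - pd b (G a) u₀ with hKdef
  have hKanti : ∀ a b, K b a = - K a b := by intro a b; simp only [hKdef]; ring
  have hKconst : ∀ a b, ∀ u ∈ U, pd a (G b) u - pd b (G a) u = K a b := by
    intro a b u hu
    have hz : ∀ x ∈ U, ∀ k, pd k (fun y => pd a (G b) y - pd b (G a) y) x = 0 := by
      intro x hx k
      have hd1 : DifferentiableAt ℝ (pd a (G b)) x := hpdGdiff a b x hx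
      have hd2 : DifferentiableAt ℝ (pd b (G a)) x := hpdGdiff b a x hx
      have hpd : pd k (fun y => pd a (G b) y - pd b (G a) y) x
          = pd2 a k (G b) x - pd2 b k (G a) x := by
        unfold pd2
        show fderiv ℝ (fun y => pd a (G b) y - pd b (G a) y) x (Pi.single k 1)
          = pd k (pd a (G b)) x - pd k (pd b (G a)) x
        rw [fderiv_fun_sub hd1 hd2]
        rfl
      rw [hpd, hsymG x hx a b k]; ring
    exact const_on_convex hUo hUc
      (fun x hx => (hpdGdiff a b x hx).sub (hpdGdiff b a x hx)) hz hu hu₀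
  set c : Fin N → Fin N → ℝ := fun a b => K a b / 2 with hcdef
  set L : Fin N → (Fin N → ℝ) →L[ℝ] ℝ :=
    fun b => ∑ kk, (K b kk / 2) • ContinuousLinearMap.proj kk with hLdef
  have hLapply : ∀ b v, L b v = ∑ kk, (K b kk / 2) * v kk := by
    intro b v
    simp [hLdef, ContinuousLinearMap.sum_apply, ContinuousLinearMap.smul_apply,
      ContinuousLinearMap.proj_apply]
  have hLsingle : ∀ b a, L b (Pi.single a 1) = K b a / 2 := by
    intro b a
    rw [hLapply]
    rw [Finset.sum_eq_single a]
    · simp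
    · intro kk _ hkk; simp [Pi.single_apply, hkk]
    · simp
  set om : Fin N → (Fin N → ℝ) → ℝ := fun b u => G b u + L b u with hωdef
  have hωsmooth : ∀ b, ContDiffOn ℝ ∞ (om b) U :=
    fun b => (hGsmooth b).add ((L b).contDiff.contDiffOn)
  have hpdω : ∀ u ∈ U, ∀ a b, pd a (om b) u = pd a (G b) u + K b a / 2 := by
    intro u hu a b
    have h1 : DifferentiableAt ℝ (G b) u := (hGat b u hu).differentiableAt (by simp)
    show fderiv ℝ (fun x => G b x + L b x) u (Pi.single a 1) = _
    rw [fderiv_fun_add h1 (L b).differentiableAt, (L b).fderiv]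
    rw [ContinuousLinearMap.add_apply, hLsingle]
    rfl
  have hclosed : ∀ u ∈ U, ∀ a b, pd a (om b) u = pd b (om a) u := by
    intro u hu a b
    rw [hpdω u hu a b, hpdω u hu b a]
    have h := hKconst a b u hu
    have h2 := hKanti a b
    linear_combination h + h2 / 2
  set W : (Fin N → ℝ) → ((Fin N → ℝ) →L[ℝ] ℝ) :=
    fun u => ∑ s, om s u • ContinuousLinearMap.proj s with hWdef
  have hWsingle : ∀ u s, W u (Pi.single s 1) = om s u := by
    intro u s
    simp only [hWdef, ContinuousLinearMap.sum_apply, ContinuousLinearMap.smul_apply,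
      ContinuousLinearMap.proj_apply, smul_eq_mul]
    rw [Finset.sum_eq_single s]
    · simp
    · intro kk _ hkk; simp [Pi.single_apply, hkk]
    · simp
  have hWsmooth : ContDiffOn ℝ ∞ W U :=
    ContDiffOn.sum fun s _ => (hωsmooth s).smul contDiffOn_const
  have hWdiffat : ∀ u ∈ U, DifferentiableAt ℝ W u :=
    fun u hu => (hWsmooth.contDiffAt (hUo.mem_nhds hu)).differentiableAt (by simp)
  have hDWsingle : ∀ u ∈ U, ∀ a kk,
      fderiv ℝ W u (Pi.single a 1) (Pi.single kk 1) = pd a (om kk) u := by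
    intro u hu a kk
    have hfun : (fun x => W x (Pi.single kk 1)) = om kk := funext fun x => hWsingle x kk
    have h := ((ContinuousLinearMap.apply ℝ ℝ (Pi.single kk 1)).hasFDerivAt.comp u
      (hWdiffat u hu).hasFDerivAt).fderiv
    have h2 : fderiv ℝ (fun x => W x (Pi.single kk 1)) u =
        (ContinuousLinearMap.apply ℝ ℝ (Pi.single kk 1)).comp (fderiv ℝ W u) := by
      rw [← h]; rfl
    calc fderiv ℝ W u (Pi.single a 1) (Pi.single kk 1)
        = ((ContinuousLinearMap.apply ℝ ℝ (Pi.single kk 1)).comp (fderiv ℝ W u))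
            (Pi.single a 1) := rfl
      _ = fderiv ℝ (fun x => W x (Pi.single kk 1)) u (Pi.single a 1) := by rw [h2]
      _ = pd a (om kk) u := by rw [hfun]; rfl
  have hsymW : ∀ u ∈ U, ∀ v w, fderiv ℝ W u v w = fderiv ℝ W u w v := by
    intro u hu v w
    exact clm2_symm (fun a kk => by
      rw [hDWsingle u hu a kk, hDWsingle u hu kk a, hclosed u hu a kk]) v w
  obtain ⟨Φ, hΦsmooth, hΦderiv⟩ := poincare hUo hUc hu₀ W hWsmooth hsymW
  refine ⟨c, Φ, hΦsmooth, ?_⟩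
  intro i u hu
  have hpdΦ : ∀ s, pd s Φ u = om s u := by
    intro s
    show fderiv ℝ Φ u (Pi.single s 1) = om s u
    rw [(hΦderiv u hu).fderiv, hWsingle]
  have hlin : ∀ s, (1 / 2 : ℝ) * ∑ kk, (c s kk - c kk s) * u kk = L s u := by
    intro s
    rw [hLapply, Finset.mul_sum]
    refine Finset.sum_congr rfl fun kk _ => ?_
    have h2 : c s kk - c kk s = K s kk := by
      simp only [hcdef]
      rw [hKanti s kk]; ring
    rw [h2]; ring
  calc H i u = ∑ s, η i s * ∑ j, ηi s j * H j u := (collapse hδ1 (fun j => H j u) i).symm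
    _ = ∑ s, η i s * (pd s Φ u - (1 / 2) * ∑ k, (c s k - c k s) * u k) := by
        refine Finset.sum_congr rfl fun s _ => ?_
        congr 1
        rw [hpdΦ s, hlin s, hωdef]
        ring
end
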